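/- arXiv:2605.04712 — 2 statements merged into one kernel-verified Lean document; each statement's English description precedes it below -/
import Mathlib

section
/- Let M be a block-diagonal real matrix, M = M_1 ⊕ M_2 ⊕ ... ⊕ M_B (direct sum of square blocks). For each block b let s_b = ‖M_b‖_* be its nuclear norm (the sum of its singular values), and assume Σ_b s_b > 0. Define mixture weights α_b = s_b / Σ_m s_m. Then the spectral-entropy effective rank satisfies r_e(M) = exp( H(α) + Σ_{b : s_b > 0} α_b · log r_e(M_b) ), where H(α) = −Σ_{b : s_b > 0} α_b log α_b. -/
open Matrix

/-- Singular values of a real matrix: the square roots of the eigenvalues of `Aᴴ * A`. -/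
noncomputable def singVals {m n : Type*} [Fintype m] [Fintype n] [DecidableEq n]
    (A : Matrix m n ℝ) : n → ℝ :=
  fun i => Real.sqrt ((Matrix.isHermitian_conjTranspose_mul_self A).eigenvalues i)

/-- Spectral-entropy effective rank: `exp(-∑ p_i log p_i)` with `p_i = σ_i / ∑ σ_j`. -/
noncomputable def effRank {m n : Type*} [Fintype m] [Fintype n] [DecidableEq n]
    (A : Matrix m n ℝ) : ℝ :=
  Real.exp (-(∑ i, (singVals A i / ∑ j, singVals A j) *
      Real.log (singVals A i / ∑ j, singVals A j)))

/-- The nuclear norm: sum of the singular values. -/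
noncomputable def nuclearNorm {m n : Type*} [Fintype m] [Fintype n] [DecidableEq n]
    (A : Matrix m n ℝ) : ℝ := ∑ i, singVals A i

section Aux

open Polynomial Finset

variable {R : Type*} [CommRing R]

/-- fiber equiv -/
def fiberEquiv {B : Type*} {d : B → Type*} (k : B) :
    d k ≃ {a : Σ b, d b // a.1 = k} where
  toFun i := ⟨⟨k, i⟩, rfl⟩
  invFun p := p.property ▸ p.val.snd
  left_inv i := rfl
  right_inv := by rintro ⟨⟨b, i⟩, rfl⟩; rfl

lemma my_det_blockDiagonal' {B : Type*} [Fintype B] [DecidableEq B] {d : B → Type*}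
    [∀ b, Fintype (d b)] [∀ b, DecidableEq (d b)] (M : ∀ b, Matrix (d b) (d b) R) :
    (blockDiagonal' M).det = ∏ b, (M b).det := by
  letI : LinearOrder B := LinearOrder.lift' (Fintype.equivFin B) (Fintype.equivFin B).injective
  rw [(blockTriangular_blockDiagonal' M).det_fintype]
  refine Finset.prod_congr rfl fun k _ => ?_
  have h : M k = ((blockDiagonal' M).toSquareBlock Sigma.fst k).submatrix
      (fiberEquiv k) (fiberEquiv k) := by
    ext i j
    simp [toSquareBlock_def, fiberEquiv]
  rw [h, det_submatrix_equiv_self]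

lemma my_charmatrix_blockDiagonal' {B : Type*} [Fintype B] [DecidableEq B] {d : B → Type*}
    [∀ b, Fintype (d b)] [∀ b, DecidableEq (d b)] (M : ∀ b, Matrix (d b) (d b) R) :
    charmatrix (blockDiagonal' M) = blockDiagonal' fun b => charmatrix (M b) := by
  have h1 : ((C : R →+* R[X]).mapMatrix (blockDiagonal' M) : Matrix _ _ R[X])
      = blockDiagonal' fun b => (C : R →+* R[X]).mapMatrix (M b) := by
    simpa [RingHom.mapMatrix_apply] using
      blockDiagonal'_map M (⇑(C : R →+* R[X])) (map_zero _)
  have h2 : (Matrix.scalar ((b : B) × d b) (X : R[X]))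
      = blockDiagonal' fun b => Matrix.scalar (d b) (X : R[X]) := by
    simp only [Matrix.scalar_apply]
    rw [blockDiagonal'_diagonal]
  unfold charmatrix
  rw [h1, h2, ← blockDiagonal'_sub]
  rfl

lemma my_charpoly_blockDiagonal' {B : Type*} [Fintype B] [DecidableEq B] {d : B → Type*}
    [∀ b, Fintype (d b)] [∀ b, DecidableEq (d b)] (M : ∀ b, Matrix (d b) (d b) R) :
    (blockDiagonal' M).charpoly = ∏ b, (M b).charpoly := by
  unfold Matrix.charpoly
  rw [my_charmatrix_blockDiagonal', my_det_blockDiagonal']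

lemma my_charpoly_conj {n : Type*} [Fintype n] [DecidableEq n]
    (V D W : Matrix n n R) (hVW : V * W = 1) :
    (V * D * W).charpoly = D.charpoly := by
  let mc : Matrix n n R →+* Matrix n n R[X] := (C : R →+* R[X]).mapMatrix
  have hmc : (mc V) * (mc W) = 1 := by rw [← _root_.map_mul, hVW, _root_.map_one]
  have hdet : (mc V).det * (mc W).det = 1 := by rw [← det_mul, hmc, det_one]
  have key : charmatrix (V * D * W) = mc V * charmatrix D * mc W := by
    unfold charmatrix
    have hscalar : Matrix.scalar n (X : R[X]) = (X : R[X]) • (1 : Matrix n n R[X]) := by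
      ext i j
      simp only [Matrix.scalar_apply, Matrix.smul_apply, Matrix.one_apply, smul_eq_mul]
      rcases eq_or_ne i j with rfl | h
      · simp
      · simp [h]
    rw [mul_sub, sub_mul, hscalar]
    congr 1
    · rw [eq_comm, mul_smul_comm, smul_mul_assoc, mul_one, hmc]
    · simp only [← _root_.map_mul, mc]
  rw [Matrix.charpoly, key, det_mul, det_mul, Matrix.charpoly]
  rw [mul_comm ((mc V).det), mul_assoc, hdet, mul_one]

set_option maxHeartbeats 1000000 in
lemma my_charpoly_hermitian {n : Type*} [Fintype n] [DecidableEq n]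
    {A : Matrix n n ℝ} (hA : A.IsHermitian) :
    A.charpoly = ∏ i, (X - C (hA.eigenvalues i)) := by
  have hU : (hA.eigenvectorUnitary : Matrix n n ℝ)
      * star (hA.eigenvectorUnitary : Matrix n n ℝ) = 1 :=
    (Matrix.mem_unitaryGroup_iff).mp (hA.eigenvectorUnitary).2
  have h1 : A.charpoly = (diagonal (RCLike.ofReal ∘ hA.eigenvalues) : Matrix n n ℝ).charpoly := by
    conv_lhs => rw [hA.spectral_theorem]
    exact my_charpoly_conj _ _ _ hU
  have h2 : charmatrix (diagonal (RCLike.ofReal ∘ hA.eigenvalues) : Matrix n n ℝ)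
      = diagonal (fun i => X - C (hA.eigenvalues i)) := by
    ext i j
    rcases eq_or_ne i j with rfl | h
    · simp
    · simp [h]
  rw [h1, Matrix.charpoly, h2, det_diagonal]

lemma my_eig_roots {n : Type*} [Fintype n] [DecidableEq n]
    {A : Matrix n n ℝ} (hA : A.IsHermitian) :
    A.charpoly.roots = Finset.univ.val.map hA.eigenvalues := by
  rw [my_charpoly_hermitian hA, Finset.prod_eq_multiset_prod]
  have h : Multiset.map (fun i => X - C (hA.eigenvalues i)) Finset.univ.val
      = Multiset.map (fun a => X - C a) (Multiset.map hA.eigenvalues Finset.univ.val) := by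
    rw [Multiset.map_map]; rfl
  rw [h, roots_multiset_prod_X_sub_C]

lemma my_singVals_sum {B : Type*} [Fintype B] [DecidableEq B] {d : B → Type*}
    [∀ b, Fintype (d b)] [∀ b, DecidableEq (d b)]
    (M : ∀ b, Matrix (d b) (d b) ℝ) (f : ℝ → ℝ) :
    ∑ p : (b : B) × d b, f (singVals (blockDiagonal' M) p)
      = ∑ b, ∑ i, f (singVals (M b) i) := by
  have hbd : (blockDiagonal' M)ᴴ * blockDiagonal' M
      = blockDiagonal' (fun b => (M b)ᴴ * M b) := by
    rw [blockDiagonal'_conjTranspose, blockDiagonal'_mul]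
  have key : Finset.univ.val.map (isHermitian_conjTranspose_mul_self (blockDiagonal' M)).eigenvalues
      = Finset.univ.val.bind
        (fun b => Finset.univ.val.map (isHermitian_conjTranspose_mul_self (M b)).eigenvalues) := by
    rw [← my_eig_roots]
    have hcp : ((blockDiagonal' M)ᴴ * blockDiagonal' M).charpoly
        = ∏ b, ((M b)ᴴ * M b).charpoly := by
      rw [hbd, my_charpoly_blockDiagonal']
    rw [hcp, roots_prod]
    · exact congrArg _ (funext fun b => my_eig_roots _)
    · exact Finset.prod_ne_zero_iff.mpr fun b _ => (Matrix.charpoly_monic _).ne_zero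
  have h2 := congrArg (fun s : Multiset ℝ => (s.map (fun x => f (Real.sqrt x))).sum) key
  simp only [Multiset.map_map, Multiset.map_bind, Multiset.sum_bind, Function.comp] at h2
  simp only [singVals, Finset.sum_eq_multiset_sum]
  convert h2 using 2

end Aux

/-- **Block-diagonal effective rank.**  If `M = ⊕_b M_b` is block diagonal, `s_b = ‖M_b‖_*`
with `∑_b s_b > 0`, and `α_b = s_b / ∑_m s_m`, then
`r_e(M) = exp(H(α) + ∑_{b : s_b > 0} α_b log r_e(M_b))` with
`H(α) = -∑_{b : s_b > 0} α_b log α_b`. -/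
theorem stmt0 {B : Type*} [Fintype B] [DecidableEq B] {d : B → Type*}
    [∀ b, Fintype (d b)] [∀ b, DecidableEq (d b)]
    (M : ∀ b, Matrix (d b) (d b) ℝ)
    (hpos : 0 < ∑ b, nuclearNorm (M b))
    (α : B → ℝ) (hα : ∀ b, α b = nuclearNorm (M b) / ∑ m, nuclearNorm (M m)) :
    effRank (Matrix.blockDiagonal' M) =
      Real.exp
        ((-∑ b ∈ Finset.univ.filter (fun b => 0 < nuclearNorm (M b)), α b * Real.log (α b)) +
          ∑ b ∈ Finset.univ.filter (fun b => 0 < nuclearNorm (M b)),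
            α b * Real.log (effRank (M b))) := by
  set S : ℝ := ∑ b, nuclearNorm (M b) with hS
  have hS0 : S ≠ 0 := ne_of_gt hpos
  have hσ : ∀ b i, 0 ≤ singVals (M b) i := fun b i => Real.sqrt_nonneg _
  have hT : ∑ j, singVals (Matrix.blockDiagonal' M) j = S := by
    simpa [S, nuclearNorm] using my_singVals_sum M (fun x => x)
  have hL : effRank (Matrix.blockDiagonal' M)
      = Real.exp (-(∑ b, ∑ i,
          (singVals (M b) i / S) * Real.log (singVals (M b) i / S))) := by
    unfold effRank
    rw [hT, my_singVals_sum M (fun x => (x / S) * Real.log (x / S))]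
  rw [hL]
  congr 1
  have hblock : ∀ b, (∑ i, (singVals (M b) i / S) * Real.log (singVals (M b) i / S))
      = if 0 < nuclearNorm (M b) then
          α b * Real.log (α b) - α b * Real.log (effRank (M b)) else 0 := by
    intro b
    by_cases hb : 0 < nuclearNorm (M b)
    · rw [if_pos hb]
      have hs0 : nuclearNorm (M b) ≠ 0 := ne_of_gt hb
      have hlogeff : Real.log (effRank (M b))
          = -(∑ i, (singVals (M b) i / nuclearNorm (M b)) *
              Real.log (singVals (M b) i / nuclearNorm (M b))) := by
        unfold effRank
        rw [Real.log_exp]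
        rfl
      rw [hlogeff, hα b]
      rw [mul_neg, sub_neg_eq_add, Finset.mul_sum]
      have h1 : (nuclearNorm (M b) / S) * Real.log (nuclearNorm (M b) / S)
          = ∑ i, (singVals (M b) i / S) * Real.log (nuclearNorm (M b) / S) := by
        rw [← Finset.sum_mul, ← Finset.sum_div]
        rfl
      rw [h1, ← Finset.sum_add_distrib]
      refine Finset.sum_congr rfl fun i _ => ?_
      rcases eq_or_lt_of_le (hσ b i) with h0 | h0
      · rw [← h0]
        simp
      · have hσ0 : singVals (M b) i ≠ 0 := ne_of_gt h0
        have e1 : (nuclearNorm (M b) / S) * ((singVals (M b) i / nuclearNorm (M b)) *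
            Real.log (singVals (M b) i / nuclearNorm (M b)))
            = (singVals (M b) i / S) * Real.log (singVals (M b) i / nuclearNorm (M b)) := by
          field_simp
        rw [e1, ← mul_add, ← Real.log_mul (by positivity) (by positivity)]
        congr 2
        field_simp
    · rw [if_neg hb]
      have hs0 : nuclearNorm (M b) = 0 := by
        rcases eq_or_lt_of_le (Finset.sum_nonneg fun i _ => hσ b i :
            (0:ℝ) ≤ ∑ i, singVals (M b) i) with h | h
        · exact h.symm
        · exact absurd h hb
      have hz : ∀ i ∈ Finset.univ, singVals (M b) i = 0 :=
        (Finset.sum_eq_zero_iff_of_nonneg (fun i _ => hσ b i)).mp hs0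
      refine Finset.sum_eq_zero fun i hi => by rw [hz i hi]; simp
  calc -(∑ b, ∑ i, (singVals (M b) i / S) * Real.log (singVals (M b) i / S))
      = -(∑ b, if 0 < nuclearNorm (M b) then
          α b * Real.log (α b) - α b * Real.log (effRank (M b)) else 0) :=
        congrArg Neg.neg (Finset.sum_congr rfl fun b _ => hblock b)
    _ = -(∑ b ∈ Finset.univ.filter (fun b => 0 < nuclearNorm (M b)),
          (α b * Real.log (α b) - α b * Real.log (effRank (M b)))) := by
        rw [Finset.sum_filter]
    _ = _ := by
        rw [Finset.sum_sub_distrib]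
        ring
end

section
/- Let A and B be nonzero real matrices. Then the spectral-entropy effective rank of their Kronecker product is multiplicative: r_e(A ⊗ B) = r_e(A) · r_e(B). -/
open Matrix

open scoped Kronecker

section Aux

open Polynomial

set_option linter.unusedSectionVars false

variable {n : Type*} [Fintype n] [DecidableEq n]

lemma my_charpoly_conj_s2 (P N Q : Matrix n n ℝ) (h1 : P * Q = 1) :
    (P * N * Q).charpoly = N.charpoly := by
  have hPQ : (P.map C) * (Q.map C) = 1 := by
    have := congrArg (Matrix.map · (C : ℝ →+* ℝ[X])) h1
    simpa [Matrix.map_mul] using this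
  have key : charmatrix (P * N * Q) = (P.map C) * charmatrix N * (Q.map C) := by
    unfold charmatrix
    rw [Matrix.mul_sub, Matrix.sub_mul]
    congr 1
    · rw [← Matrix.scalar_commute (X : ℝ[X]) (Commute.all X) (P.map C), mul_assoc, hPQ, mul_one]
    · simp [Matrix.map_mul]
  unfold Matrix.charpoly
  rw [key, det_mul, det_mul, mul_right_comm, ← det_mul, hPQ]
  simp

lemma my_charpoly_diagonal (d : n → ℝ) :
    (Matrix.diagonal d).charpoly = ∏ i, (X - C (d i)) := by
  have : charmatrix (Matrix.diagonal d) = Matrix.diagonal (fun i => (X : ℝ[X]) - C (d i)) := by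
    ext i j
    by_cases h : i = j
    · subst h; simp
    · simp [charmatrix_apply_ne _ _ _ h, Matrix.diagonal_apply_ne _ h]
  rw [Matrix.charpoly, this, det_diagonal]

lemma my_charpoly_hermitian_s2 (M : Matrix n n ℝ) (hM : M.IsHermitian) :
    M.charpoly = ∏ i, (X - C (hM.eigenvalues i)) := by
  have hU := (Matrix.mem_unitaryGroup_iff).mp (hM.eigenvectorUnitary).2
  conv_lhs => rw [hM.spectral_theorem]
  rw [Unitary.conjStarAlgAut_apply, my_charpoly_conj_s2 _ _ _ hU, RCLike.ofReal_real_eq_id, Function.id_comp,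
    my_charpoly_diagonal]

lemma multiset_of_prod_eq {ι κ : Type*} [Fintype ι] [Fintype κ]
    (f : ι → ℝ) (g : κ → ℝ)
    (h : ∏ i, (X - C (f i)) = ∏ j, (X - C (g j))) :
    Finset.univ.val.map f = Finset.univ.val.map g := by
  have hf : ∏ i, (X - C (f i)) = ((Finset.univ.val.map f).map (fun a => X - C a)).prod := by
    rw [Multiset.map_map]; rfl
  have hg : ∏ j, (X - C (g j)) = ((Finset.univ.val.map g).map (fun a => X - C a)).prod := by
    rw [Multiset.map_map]; rfl
  have := congrArg Polynomial.roots (hf ▸ hg ▸ h)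
  rwa [roots_multiset_prod_X_sub_C, roots_multiset_prod_X_sub_C] at this

lemma sum_f_eq_of_multiset {ι κ : Type*} [Fintype ι] [Fintype κ] {s : ι → ℝ} {t : κ → ℝ}
    (h : Finset.univ.val.map s = Finset.univ.val.map t) (f : ℝ → ℝ) :
    ∑ i, f (s i) = ∑ j, f (t j) := by
  calc ∑ i, f (s i) = ((Finset.univ.val.map s).map f).sum := by rw [Multiset.map_map]; rfl
    _ = ((Finset.univ.val.map t).map f).sum := by rw [h]
    _ = ∑ j, f (t j) := by rw [Multiset.map_map]; rfl

variable {m p q : Type*} [Fintype m] [Fintype p] [Fintype q] [DecidableEq q]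

lemma kron_herm_eq (A : Matrix m n ℝ) (B : Matrix p q ℝ) :
    (A ⊗ₖ B)ᴴ * (A ⊗ₖ B) = (Aᴴ * A) ⊗ₖ (Bᴴ * B) := by
  rw [Matrix.mul_kronecker_mul]
  congr 1

lemma kron_spectral (A : Matrix m n ℝ) (B : Matrix p q ℝ) :
    ((Aᴴ * A) ⊗ₖ (Bᴴ * B)).charpoly =
      ∏ x : n × q, (X - C ((Matrix.isHermitian_conjTranspose_mul_self A).eigenvalues x.1 *
        (Matrix.isHermitian_conjTranspose_mul_self B).eigenvalues x.2)) := by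
  set hM := Matrix.isHermitian_conjTranspose_mul_self A
  set hN := Matrix.isHermitian_conjTranspose_mul_self B
  set U := (hM.eigenvectorUnitary : Matrix n n ℝ)
  set V := (hN.eigenvectorUnitary : Matrix q q ℝ)
  have hU : U * star U = 1 := (Matrix.mem_unitaryGroup_iff).mp hM.eigenvectorUnitary.2
  have hV : V * star V = 1 := (Matrix.mem_unitaryGroup_iff).mp hN.eigenvectorUnitary.2
  have hMdiag : Aᴴ * A = U * Matrix.diagonal hM.eigenvalues * star U := by
    have := hM.spectral_theorem
    rwa [Unitary.conjStarAlgAut_apply, RCLike.ofReal_real_eq_id, Function.id_comp] at this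
  have hNdiag : Bᴴ * B = V * Matrix.diagonal hN.eigenvalues * star V := by
    have := hN.spectral_theorem
    rwa [Unitary.conjStarAlgAut_apply, RCLike.ofReal_real_eq_id, Function.id_comp] at this
  have key : (Aᴴ * A) ⊗ₖ (Bᴴ * B) =
      (U ⊗ₖ V) * (Matrix.diagonal hM.eigenvalues ⊗ₖ Matrix.diagonal hN.eigenvalues) *
        (star U ⊗ₖ star V) := by
    conv_lhs => rw [hMdiag, hNdiag]
    rw [Matrix.mul_kronecker_mul, Matrix.mul_kronecker_mul]
  have h1 : (U ⊗ₖ V) * (star U ⊗ₖ star V) = 1 := by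
    rw [← Matrix.mul_kronecker_mul, hU, hV, Matrix.one_kronecker_one]
  rw [key, my_charpoly_conj_s2 _ _ _ h1, Matrix.diagonal_kronecker_diagonal,
    my_charpoly_diagonal]

lemma singVals_kron_multiset (A : Matrix m n ℝ) (B : Matrix p q ℝ) :
    Finset.univ.val.map (singVals (A ⊗ₖ B)) =
      Finset.univ.val.map (fun x : n × q => singVals A x.1 * singVals B x.2) := by
  have hK := Matrix.isHermitian_conjTranspose_mul_self (A ⊗ₖ B)
  have e2 : ∏ x : n × q, (X - C (hK.eigenvalues x)) =
      ∏ x : n × q, (X - C ((Matrix.isHermitian_conjTranspose_mul_self A).eigenvalues x.1 *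
        (Matrix.isHermitian_conjTranspose_mul_self B).eigenvalues x.2)) := by
    rw [← my_charpoly_hermitian_s2 _ hK, kron_herm_eq, kron_spectral]
  calc Finset.univ.val.map (singVals (A ⊗ₖ B))
      = (Finset.univ.val.map hK.eigenvalues).map Real.sqrt := by rw [Multiset.map_map]; rfl
    _ = (Finset.univ.val.map (fun x : n × q =>
          (Matrix.isHermitian_conjTranspose_mul_self A).eigenvalues x.1 *
          (Matrix.isHermitian_conjTranspose_mul_self B).eigenvalues x.2)).map Real.sqrt := by
        rw [multiset_of_prod_eq _ _ e2]
    _ = Finset.univ.val.map (fun x : n × q => singVals A x.1 * singVals B x.2) := by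
        rw [Multiset.map_map]
        refine Multiset.map_congr rfl ?_
        intro x _
        exact Real.sqrt_mul
          ((Matrix.posSemidef_conjTranspose_mul_self A).eigenvalues_nonneg x.1) _

lemma sum_singVals_pos (A : Matrix m n ℝ) (hA : A ≠ 0) : 0 < ∑ i, singVals A i := by
  have hnn : ∀ i, 0 ≤ singVals A i := fun i => Real.sqrt_nonneg _
  by_contra hcon
  push_neg at hcon
  have hsum0 : ∑ i, singVals A i = 0 :=
    le_antisymm hcon (Finset.sum_nonneg fun i _ => hnn i)
  have hzero : ∀ i, singVals A i = 0 := fun i =>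
    (Finset.sum_eq_zero_iff_of_nonneg (fun i _ => hnn i)).mp hsum0 i (Finset.mem_univ i)
  set hM := Matrix.isHermitian_conjTranspose_mul_self A
  have heig : hM.eigenvalues = 0 := by
    funext i
    have h1 := (Matrix.posSemidef_conjTranspose_mul_self A).eigenvalues_nonneg i
    have h2 : Real.sqrt (hM.eigenvalues i) = 0 := hzero i
    have := (Real.sqrt_eq_zero h1).mp h2
    simpa using this
  have hMdiag : Aᴴ * A = 0 := by
    have hsp := hM.spectral_theorem
    rw [Unitary.conjStarAlgAut_apply, RCLike.ofReal_real_eq_id, Function.id_comp, heig] at hsp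
    have hd : (Matrix.diagonal (0 : n → ℝ)) = 0 := by
      ext i j; simp [Matrix.diagonal_apply]
    rw [hd, Matrix.mul_zero, Matrix.zero_mul] at hsp
    exact hsp
  exact hA (Matrix.conjTranspose_mul_self_eq_zero.mp hMdiag)

end Aux

/-- **Kronecker effective rank.** For nonzero real matrices `A` and `B`, the spectral-entropy
effective rank of the Kronecker product is multiplicative: `r_e(A ⊗ B) = r_e(A) · r_e(B)`. -/
theorem stmt2 {m n p q : Type*} [Fintype m] [Fintype n] [Fintype p] [Fintype q]
    [DecidableEq n] [DecidableEq q]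
    (A : Matrix m n ℝ) (B : Matrix p q ℝ) (hA : A ≠ 0) (hB : B ≠ 0) :
    effRank (A ⊗ₖ B) = effRank A * effRank B := by
  classical
  have ha : ∀ i, 0 ≤ singVals A i := fun i => Real.sqrt_nonneg _
  have hb : ∀ j, 0 ≤ singVals B j := fun j => Real.sqrt_nonneg _
  have hS : 0 < ∑ i, singVals A i := sum_singVals_pos A hA
  have hT : 0 < ∑ j, singVals B j := sum_singVals_pos B hB
  set S := ∑ i, singVals A i with hSdef
  set T := ∑ j, singVals B j with hTdef
  have hmult := singVals_kron_multiset A B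
  have hsum : (∑ k, singVals (A ⊗ₖ B) k) = S * T := by
    have h1 := sum_f_eq_of_multiset hmult id
    simp only [id] at h1
    rw [h1, hSdef, hTdef, Finset.sum_mul_sum, ← Finset.univ_product_univ, Finset.sum_product]
  set p' : n → ℝ := fun i => singVals A i / S with hp'
  set q' : q → ℝ := fun j => singVals B j / T with hq'
  have hps : ∑ i, p' i = 1 := by
    rw [hp']; rw [← Finset.sum_div]; exact div_self hS.ne'
  have hqs : ∑ j, q' j = 1 := by
    rw [hq']; rw [← Finset.sum_div]; exact div_self hT.ne'
  have hterm : ∀ x y : ℝ, 0 ≤ x → 0 ≤ y →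
      (x * y) * Real.log (x * y) = (x * Real.log x) * y + x * (y * Real.log y) := by
    intro x y hx hy
    rcases eq_or_lt_of_le hx with h | h
    · simp [← h]
    rcases eq_or_lt_of_le hy with h' | h'
    · simp [← h']
    rw [Real.log_mul h.ne' h'.ne']; ring
  have hE : ∑ k, (singVals (A ⊗ₖ B) k / (S * T)) * Real.log (singVals (A ⊗ₖ B) k / (S * T))
      = (∑ i, p' i * Real.log (p' i)) + (∑ j, q' j * Real.log (q' j)) := by
    have h2 := sum_f_eq_of_multiset hmult (fun x => x / (S * T) * Real.log (x / (S * T)))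
    rw [h2]
    have hrw : ∀ x : n × q, (singVals A x.1 * singVals B x.2) / (S * T) = p' x.1 * q' x.2 := by
      intro x
      rw [hp', hq']
      exact (div_mul_div_comm _ _ _ _).symm
    calc ∑ x : n × q, (singVals A x.1 * singVals B x.2) / (S * T) *
            Real.log ((singVals A x.1 * singVals B x.2) / (S * T))
        = ∑ x : n × q, (p' x.1 * q' x.2) * Real.log (p' x.1 * q' x.2) := by
          refine Finset.sum_congr rfl fun x _ => ?_
          rw [hrw x]
      _ = ∑ x : n × q, ((p' x.1 * Real.log (p' x.1)) * q' x.2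
            + p' x.1 * (q' x.2 * Real.log (q' x.2))) := by
          refine Finset.sum_congr rfl fun x _ => ?_
          exact hterm _ _ (div_nonneg (ha x.1) hS.le) (div_nonneg (hb x.2) hT.le)
      _ = (∑ x : n × q, (p' x.1 * Real.log (p' x.1)) * q' x.2)
            + ∑ x : n × q, p' x.1 * (q' x.2 * Real.log (q' x.2)) := Finset.sum_add_distrib
      _ = (∑ i, p' i * Real.log (p' i)) * (∑ j, q' j)
            + (∑ i, p' i) * (∑ j, q' j * Real.log (q' j)) := by
          rw [Finset.sum_mul_sum, Finset.sum_mul_sum, ← Finset.univ_product_univ,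
            Finset.sum_product, Finset.sum_product]
      _ = (∑ i, p' i * Real.log (p' i)) + (∑ j, q' j * Real.log (q' j)) := by
          rw [hps, hqs, mul_one, one_mul]
  unfold effRank
  rw [← Real.exp_add, ← neg_add]
  congr 1
  rw [hsum, hE]
end
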